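/- arXiv:2001.09304 — 2 statements merged into one kernel-verified Lean document; each statement's English description precedes it below -/
import Mathlib

section
/- Let Γ be a profinite group isomorphic to ℤ_p, and for n ≥ 0 let Γ_n = Γ^{p^n} be the unique open subgroup of index p^n. Let M be a finitely generated module over the Iwasawa algebra ℤ_p[[Γ]] and r a non-negative integer such that for every n ≥ 0, the coinvariants M_{Γ_n} form a free ℤ_p-module of rank r·p^n. Then M is a free ℤ_p[[Γ]]-module of rank r. -/
/-!
Write `Λ = ℤ_p⟦X⟧` and reduce modulo `ω₀ = X`: lifting a `ℤ_p`-basis of `M / X M ≅ ℤ_p^r` gives, by Nakayama, a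
surjection `φ : Λ^r → M`. For every `n`, Weierstrass division by the distinguished polynomial
`ω_n = (1 + X)^{p^n} - 1` makes `Λ / ω_n` free of rank `p^n` over `ℤ_p`, so `φ` induces a
surjection between free `ℤ_p`-modules of the same rank `r p^n`, which is therefore injective:
`ker φ ⊆ ω_n Λ^r`. Finally `ω_n ∈ 𝔪^{n+1}` for the maximal ideal `𝔪 = (p, X)` of `Λ`, so Krull's
intersection theorem gives `⋂ ω_n Λ = 0`, and `φ` is an isomorphism.
-/

open PowerSeries
open scoped Polynomial

theorem one_add_pow_pow_sub_one_mem_pow {S : Type*} [CommRing S] {J : Ideal S} {x : S}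
    (hx : x ∈ J) (p : ℕ) (hp : (p : S) ∈ J) (n : ℕ) :
    (1 + x) ^ p ^ n - 1 ∈ J ^ (n + 1) := by
  induction n with
  | zero => simpa using hx
  | succ n ih =>
    set y := (1 + x) ^ p ^ n
    have hy : y - 1 ∈ J := Ideal.pow_le_self n.succ_ne_zero ih
    -- `∑_{i<p} yⁱ ≡ p ≡ 0 (mod J)` because `y ≡ 1`
    have hgeom : ∑ i ∈ Finset.range p, y ^ i ∈ J := by
      have : ∑ i ∈ Finset.range p, y ^ i = ∑ i ∈ Finset.range p, (y ^ i - 1) + p := by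
        simp [Finset.sum_sub_distrib]
      rw [this]
      refine J.add_mem (J.sum_mem fun i _ => ?_) hp
      exact J.mem_of_dvd (sub_one_dvd_pow_sub_one y i) hy
    rw [pow_succ p, pow_mul, ← geom_sum_mul, pow_succ' J]
    exact Ideal.mul_mem_mul hgeom ih

theorem PowerSeries.one_add_X_pow_sub_one_mem_maximalIdeal_pow {R : Type*} [CommRing R]
    [IsLocalRing R] (p : ℕ) (hp : (p : R) ∈ IsLocalRing.maximalIdeal R) (n : ℕ) :
    ((1 + X) ^ p ^ n - 1 : R⟦X⟧) ∈ IsLocalRing.maximalIdeal R⟦X⟧ ^ (n + 1) := by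
  refine one_add_pow_pow_sub_one_mem_pow ?_ p ?_ n
  · rw [IsLocalRing.mem_maximalIdeal, mem_nonunits_iff, isUnit_iff_constantCoeff]
    simp
  · rw [IsLocalRing.mem_maximalIdeal, mem_nonunits_iff, isUnit_iff_constantCoeff]
    simpa using hp

theorem PowerSeries.iInf_span_one_add_X_pow_sub_one_eq_bot {R : Type*} [CommRing R]
    [IsNoetherianRing R] [IsLocalRing R] (p : ℕ) (hp : (p : R) ∈ IsLocalRing.maximalIdeal R) :
    ⨅ n : ℕ, Ideal.span {((1 + X) ^ p ^ n - 1 : R⟦X⟧)} = ⊥ := by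
  have hKrull := Ideal.iInf_pow_eq_bot_of_isLocalRing (IsLocalRing.maximalIdeal R⟦X⟧)
    (IsLocalRing.maximalIdeal.isMaximal R⟦X⟧).ne_top
  rw [eq_bot_iff, ← hKrull]
  refine iInf_mono fun n => (Ideal.span_singleton_le_iff_mem _).mpr ?_
  exact Ideal.pow_le_pow_right n.le_succ (one_add_X_pow_sub_one_mem_maximalIdeal_pow p hp n)

theorem Polynomial.natDegree_X_add_one_pow_sub_one {R : Type*} [CommRing R] [Nontrivial R]
    {N : ℕ} (hN : 0 < N) : ((X + 1) ^ N - 1 : R[X]).natDegree = N := by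
  have hdeg : ((X + 1) ^ N : R[X]).natDegree = N := by
    simpa using natDegree_pow_X_add_C N (1 : R)
  rw [natDegree_sub_eq_left_of_natDegree_lt (by rwa [hdeg, natDegree_one]), hdeg]

theorem Polynomial.isDistinguishedAt_X_add_one_pow_sub_one {R : Type*} [CommRing R]
    [Nontrivial R] {p : ℕ} (hp : p.Prime) {I : Ideal R} (hpI : (p : R) ∈ I) (n : ℕ) :
    ((X + 1) ^ p ^ n - 1 : R[X]).IsDistinguishedAt I := by
  have hpn : 0 < p ^ n := pow_pos hp.pos n
  refine ⟨⟨fun {k} hk => ?_⟩, ?_⟩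
  · rw [natDegree_X_add_one_pow_sub_one hpn] at hk
    rw [coeff_sub, coeff_X_add_one_pow, coeff_one]
    rcases Nat.eq_zero_or_pos k with rfl | hk0
    · simp [I.zero_mem]
    · obtain ⟨c, hc⟩ := hp.dvd_choose_pow hk0.ne' hk.ne
      rw [if_neg hk0.ne', sub_zero, hc, Nat.cast_mul]
      exact I.mul_mem_right _ hpI
  · refine ((monic_X_add_C 1).pow _).sub_of_left (degree_lt_degree ?_)
    rwa [natDegree_pow_X_add_C, natDegree_one]

noncomputable def Polynomial.IsDistinguishedAt.powerSeriesQuotientBasis {A : Type*}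
    [CommRing A] {g : A[X]} {I : Ideal A} (H : g.IsDistinguishedAt I) [IsAdicComplete I A] :
    Module.Basis (Fin g.natDegree) A (A⟦X⟧ ⧸ Ideal.span {(g : A⟦X⟧)}) :=
  (AdjoinRoot.powerBasis' H.monic).basis.map H.algEquivQuotient.toLinearEquiv

noncomputable def PowerSeries.quotientOneAddXPowSubOneBasis {R : Type*} [CommRing R]
    [Nontrivial R] {p : ℕ} (hp : p.Prime) {I : Ideal R} [IsAdicComplete I R]
    (hpI : (p : R) ∈ I) (n : ℕ) :
    Module.Basis (Fin (p ^ n)) R (R⟦X⟧ ⧸ Ideal.span {((1 + X) ^ p ^ n - 1 : R⟦X⟧)}) :=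
  ((Polynomial.isDistinguishedAt_X_add_one_pow_sub_one hp hpI n).powerSeriesQuotientBasis.reindex
    (finCongr (Polynomial.natDegree_X_add_one_pow_sub_one (pow_pos hp.pos n)))).map
    ((Submodule.quotEquivOfEq _ _ (by push_cast; rw [add_comm])).restrictScalars R)

section QuotSMulTop

variable {A Λ : Type*} [CommRing A] [CommRing Λ] [Algebra A Λ]

noncomputable def piQuotSMulTopEquiv (I : Ideal Λ) (ι : Type*) [Fintype ι] [DecidableEq ι] :
    ((ι → Λ) ⧸ I • (⊤ : Submodule Λ (ι → Λ))) ≃ₗ[A] (ι → Λ ⧸ I) :=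
  ((TensorProduct.quotTensorEquivQuotSMul (ι → Λ) I).symm ≪≫ₗ
    TensorProduct.piScalarRight Λ Λ (Λ ⧸ I) ι).restrictScalars A

noncomputable def piQuotSMulTopBasis {I : Ideal Λ} {κ : Type*} (b : Module.Basis κ A (Λ ⧸ I))
    (ι : Type*) [Fintype ι] [DecidableEq ι] :
    Module.Basis (ι × κ) A ((ι → Λ) ⧸ I • (⊤ : Submodule Λ (ι → Λ))) :=
  ((Pi.basis fun _ : ι => b).reindex (Equiv.sigmaEquivProd ι κ)).map
    (piQuotSMulTopEquiv I ι).symm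

theorem Submodule.iInf_smul_top_pi_eq_bot {R ι κ : Type*} [CommRing R] {I : κ → Ideal R}
    (hI : ⨅ k, I k = ⊥) : ⨅ k, I k • (⊤ : Submodule R (ι → R)) = ⊥ := by
  refine (Submodule.eq_bot_iff _).mpr fun v hv => funext fun i => ?_
  have hcomp : ∀ k, v i ∈ I k := fun k => by
    have : I k • (⊤ : Submodule R (ι → R)) ≤
        Submodule.comap (LinearMap.proj i : (ι → R) →ₗ[R] R) (I k) :=
      Submodule.smul_le.mpr fun a ha w _ => by simpa using (I k).mul_mem_right (w i) ha
    exact this ((Submodule.mem_iInf _).mp hv k)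
  simpa [hI] using (Submodule.mem_iInf _).mpr hcomp

theorem exists_surjective_of_quotSMulTop_equiv {M : Type*} [AddCommGroup M] [Module Λ M]
    [Module A M] [IsScalarTower A Λ M] [Module.Finite Λ M] {I : Ideal Λ}
    (hI : I ≤ Ideal.jacobson ⊥) {ι : Type*} [Fintype ι] [DecidableEq ι]
    (e : (M ⧸ I • (⊤ : Submodule Λ M)) ≃ₗ[A] (ι → A)) :
    ∃ φ : (ι → Λ) →ₗ[Λ] M, Function.Surjective φ := by
  choose m hm using fun i => Submodule.Quotient.mk_surjective _ (e.symm (Pi.single i 1))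
  refine ⟨Fintype.linearCombination Λ m, LinearMap.surjective_of_surjective_comp_mkQ _ I hI
    fun y => ⟨fun i => algebraMap A Λ (e y i), ?_⟩⟩
  have hsum : ∑ i, e y i • (Pi.single i 1 : ι → A) = e y := by
    simpa using (Pi.basisFun A ι).sum_repr (e y)
  simp only [LinearMap.comp_apply, Fintype.linearCombination_apply, algebraMap_smul,
    Submodule.mkQ_apply]
  calc Submodule.Quotient.mk (∑ i, e y i • m i)
      = ∑ i, e y i • e.symm (Pi.single i 1) := by
        rw [← Submodule.mkQ_apply, map_sum]
        simp only [Submodule.mkQ_apply, Submodule.Quotient.mk_smul, hm]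
    _ = e.symm (∑ i, e y i • Pi.single i 1) := by simp only [map_sum, map_smul]
    _ = y := by rw [hsum, e.symm_apply_apply]

theorem ker_le_smul_top_of_finrank_le [OrzechProperty A] {F M : Type*}
    [AddCommGroup F] [Module Λ F] [Module A F] [IsScalarTower A Λ F]
    [AddCommGroup M] [Module Λ M] [Module A M] [IsScalarTower A Λ M]
    (I : Ideal Λ) {φ : F →ₗ[Λ] M} (hφ : Function.Surjective φ)
    [Module.Free A (F ⧸ I • (⊤ : Submodule Λ F))] [Module.Finite A (F ⧸ I • (⊤ : Submodule Λ F))]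
    [Module.Free A (M ⧸ I • (⊤ : Submodule Λ M))] [Module.Finite A (M ⧸ I • (⊤ : Submodule Λ M))]
    (h : Module.finrank A (F ⧸ I • (⊤ : Submodule Λ F)) ≤
      Module.finrank A (M ⧸ I • (⊤ : Submodule Λ M))) :
    LinearMap.ker φ ≤ I • ⊤ := by
  set φbar := (Submodule.mapQ _ _ φ (Submodule.smul_top_le_comap_smul_top I φ)).restrictScalars A
  have hsurj : Function.Surjective φbar := by
    intro y
    obtain ⟨m, rfl⟩ := Submodule.Quotient.mk_surjective _ y
    obtain ⟨f, rfl⟩ := hφ m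
    exact ⟨Submodule.Quotient.mk f, rfl⟩
  have hinj := (OrzechProperty.bijective_of_surjective_of_finrank_le φbar hsurj h).1
  intro k hk
  rw [← Submodule.Quotient.mk_eq_zero]
  apply hinj
  simp [φbar, LinearMap.mem_ker.mp hk]

end QuotSMulTop

theorem stmt_0 (p : ℕ) [Fact p.Prime] (r : ℕ)
    (M : Type*) [AddCommGroup M]
    [Module (PowerSeries ℤ_[p]) M] [Module ℤ_[p] M]
    [IsScalarTower ℤ_[p] (PowerSeries ℤ_[p]) M]
    [Module.Finite (PowerSeries ℤ_[p]) M]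
    (hfree : ∀ n : ℕ,
      Nonempty ((M ⧸ (Ideal.span {((1 + X) ^ p ^ n - 1 : PowerSeries ℤ_[p])} •
          (⊤ : Submodule (PowerSeries ℤ_[p]) M)))
        ≃ₗ[ℤ_[p]] (Fin (r * p ^ n) → ℤ_[p]))) :
    Nonempty (M ≃ₗ[PowerSeries ℤ_[p]] (Fin r → PowerSeries ℤ_[p])) := by
  have hp : p.Prime := Fact.out
  have hpm : (p : ℤ_[p]) ∈ IsLocalRing.maximalIdeal ℤ_[p] := PadicInt.p_nonunit
  have hjac : Ideal.span {((1 + X) ^ p ^ 0 - 1 : PowerSeries ℤ_[p])} ≤ Ideal.jacobson ⊥ := by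
    rw [IsLocalRing.jacobson_eq_maximalIdeal ⊥ bot_ne_top, Ideal.span_singleton_le_iff_mem]
    simpa using one_add_X_pow_sub_one_mem_maximalIdeal_pow p hpm 0
  obtain ⟨e₀⟩ := hfree 0
  obtain ⟨φ, hφ⟩ := exists_surjective_of_quotSMulTop_equiv hjac
    (e₀.trans (LinearEquiv.funCongrLeft ℤ_[p] ℤ_[p] (finCongr (by simp : r = r * p ^ 0))))
  have hker : ∀ n, LinearMap.ker φ ≤
      Ideal.span {((1 + X) ^ p ^ n - 1 : PowerSeries ℤ_[p])} • ⊤ := by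
    intro n
    obtain ⟨e⟩ := hfree n
    let b := piQuotSMulTopBasis (quotientOneAddXPowSubOneBasis hp hpm n) (Fin r)
    have := Module.Free.of_basis b
    have := Module.Finite.of_basis b
    have := Module.Free.of_equiv (R := ℤ_[p]) e.symm
    have := Module.Finite.equiv (R := ℤ_[p]) e.symm
    refine ker_le_smul_top_of_finrank_le (A := ℤ_[p]) _ hφ ?_
    rw [Module.finrank_eq_card_basis b, e.finrank_eq]
    simp
  have hinj : LinearMap.ker φ = ⊥ := eq_bot_iff.mpr <| (le_iInf hker).trans
    (Submodule.iInf_smul_top_pi_eq_bot (iInf_span_one_add_X_pow_sub_one_eq_bot p hpm)).le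
  exact ⟨(LinearEquiv.ofBijective φ ⟨LinearMap.ker_eq_bot.mp hinj, hφ⟩).symm⟩
end

section
/- Let A be a divisible p-primary abelian group with continuous action of H ≅ ℤ_p, let A^+ and A^- be H-stable divisible subgroups, and let B be an H-stable divisible subgroup of A with short exact sequences 0 → B → A^+ ⊕ A^- → A → 0 (with the map A^+ ⊕ A^- → A given by (x,y) ↦ x − y). Suppose that for an open subgroup H_m ≤ H both H^1(H_m, B) = 0 and H^1(H_m, A) = 0, and that the invariants (B)^{H_m} and (A)^{H_m} agree with prescribed groups B_m and A_m fitting in an exact sequence 0 → B_m → A_m^+ ⊕ A_m^- → A_m → 0. Then (A^±)^{H_m} = A_m^± and H^1(H_m, A^±) = 0. -/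
/-!
STATEMENT 11. Abstract cohomological content of Corollary 3.7 of the paper.
`A` is a divisible `p`-primary abelian group with continuous action of
`H ≅ ℤ_p` (encoded through the action of a topological generator `τ`, so that
for an open subgroup `H_m` with generator `τ`, `H^0(H_m, ·) = ker(τ - 1)` and
`H^1(H_m, ·) = coker(τ - 1)`).  `A⁺, A⁻` are `H`-stable divisible subgroups and
`B` an `H`-stable divisible subgroup with a short exact sequence
`0 → B → A⁺ ⊕ A⁻ → A → 0`, `(x,y) ↦ x - y`  (equivalently `A⁺ ⊓ A⁻ = B` and
`A⁺ + A⁻ = A`).  Suppose `H^1(H_m, B) = 0` and `H^1(H_m, A) = 0`, and that the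
invariants `B^{H_m}`, `A^{H_m}` agree with prescribed groups `B_m`, `A_m`
fitting in an exact sequence `0 → B_m → A_m⁺ ⊕ A_m⁻ → A_m → 0`.  Then
`(A^±)^{H_m} = A_m^±` and `H^1(H_m, A^±) = 0`.
-/

theorem stmt_11 (p : ℕ) [Fact p.Prime]
    (A : Type*) [AddCommGroup A] (τ : A →+ A)
    -- A is divisible and p-primary
    (hdiv : ∀ n : ℕ, n ≠ 0 → ∀ a : A, ∃ b : A, n • b = a)
    (hprim : ∀ a : A, ∃ k : ℕ, p ^ k • a = 0)
    (Aplus Aminus B : AddSubgroup A)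
    -- the subgroups are τ-stable (H-stable) and divisible
    (hPstab : ∀ a ∈ Aplus, τ a ∈ Aplus) (hMstab : ∀ a ∈ Aminus, τ a ∈ Aminus)
    (hBstab : ∀ a ∈ B, τ a ∈ B)
    (hPdiv : ∀ n : ℕ, n ≠ 0 → ∀ a ∈ Aplus, ∃ b ∈ Aplus, n • b = a)
    (hMdiv : ∀ n : ℕ, n ≠ 0 → ∀ a ∈ Aminus, ∃ b ∈ Aminus, n • b = a)
    (hBdiv : ∀ n : ℕ, n ≠ 0 → ∀ a ∈ B, ∃ b ∈ B, n • b = a)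
    -- exactness of 0 → B → A⁺ ⊕ A⁻ → A → 0, (x,y) ↦ x - y
    (hker : Aplus ⊓ Aminus = B)
    (hsurj : ∀ a : A, ∃ x ∈ Aplus, ∃ y ∈ Aminus, a = x - y)
    -- H^1(H_m, B) = 0 and H^1(H_m, A) = 0
    (hH1B : ∀ b ∈ B, ∃ b' ∈ B, b = τ b' - b')
    (hH1A : ∀ a : A, ∃ a' : A, a = τ a' - a')
    -- the prescribed level-m groups
    (Bm AmP AmM Am : AddSubgroup A)
    -- the invariants B^{H_m} and A^{H_m} agree with B_m and A_m
    (hBm : ∀ a : A, a ∈ Bm ↔ a ∈ B ∧ τ a = a)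
    (hAm : ∀ a : A, a ∈ Am ↔ τ a = a)
    (hAmP : AmP ≤ Aplus) (hAmPfix : ∀ a ∈ AmP, τ a = a)
    (hAmM : AmM ≤ Aminus) (hAmMfix : ∀ a ∈ AmM, τ a = a)
    -- exactness of 0 → B_m → A_m⁺ ⊕ A_m⁻ → A_m → 0
    (hkerm : AmP ⊓ AmM = Bm)
    (hsurjm : ∀ a ∈ Am, ∃ x ∈ AmP, ∃ y ∈ AmM, a = x - y) :
    -- (A^±)^{H_m} = A_m^± ...
    ((∀ a : A, a ∈ AmP ↔ a ∈ Aplus ∧ τ a = a) ∧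
      (∀ a : A, a ∈ AmM ↔ a ∈ Aminus ∧ τ a = a)) ∧
    -- ... and H^1(H_m, A^±) = 0
    ((∀ x ∈ Aplus, ∃ y ∈ Aplus, x = τ y - y) ∧
      (∀ x ∈ Aminus, ∃ y ∈ Aminus, x = τ y - y)) := by
  have hBmem : ∀ a : A, a ∈ Aplus → a ∈ Aminus → a ∈ B := fun a h1 h2 => by
    rw [← hker]; exact ⟨h1, h2⟩
  have hBP : B ≤ Aplus := fun a ha => by rw [← hker] at ha; exact ha.1
  have hBM : B ≤ Aminus := fun a ha => by rw [← hker] at ha; exact ha.2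
  refine ⟨⟨fun a => ⟨fun h => ⟨hAmP h, hAmPfix a h⟩, ?_⟩,
    fun a => ⟨fun h => ⟨hAmM h, hAmMfix a h⟩, ?_⟩⟩, fun x hx => ?_, fun x hx => ?_⟩
  · rintro ⟨haP, hfix⟩
    obtain ⟨x, hxP, y, hyM, hxy⟩ := hsurjm a ((hAm a).2 hfix)
    have hax : a - x ∈ Bm := by
      refine (hBm _).2 ⟨hBmem _ (sub_mem haP (hAmP hxP)) ?_, ?_⟩
      · have : a - x = -y := by rw [hxy]; abel
        rw [this]; exact neg_mem (hAmM hyM)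
      · rw [map_sub, hfix, hAmPfix x hxP]
    have : a - x ∈ AmP := (hkerm ▸ hax).1
    have := add_mem this hxP
    simpa using this
  · rintro ⟨haM, hfix⟩
    obtain ⟨x, hxP, y, hyM, hxy⟩ := hsurjm a ((hAm a).2 hfix)
    have hay : a + y ∈ Bm := by
      refine (hBm _).2 ⟨hBmem _ ?_ (add_mem haM (hAmM hyM)), ?_⟩
      · have : a + y = x := by rw [hxy]; abel
        rw [this]; exact hAmP hxP
      · rw [map_add, hfix, hAmMfix y hyM]
    have : a + y ∈ AmM := (hkerm ▸ hay).2
    have := sub_mem this hyM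
    simpa using this
  · obtain ⟨a, ha⟩ := hH1A x
    obtain ⟨u, huP, v, hvM, huv⟩ := hsurj a
    have hδu : τ u - u ∈ Aplus := sub_mem (hPstab u huP) huP
    have hδv : τ v - v ∈ Aminus := sub_mem (hMstab v hvM) hvM
    have hxB : x - (τ u - u) ∈ B := by
      refine hBmem _ (sub_mem hx hδu) ?_
      have : x - (τ u - u) = -(τ v - v) := by
        rw [ha, huv, map_sub]; abel
      rw [this]; exact neg_mem hδv
    obtain ⟨b, hbB, hb⟩ := hH1B _ hxB
    refine ⟨u + b, add_mem huP (hBP hbB), ?_⟩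
    have h2 : x = (τ u - u) + (τ b - b) := by rw [← hb]; abel
    rw [h2, map_add]; abel
  · obtain ⟨a, ha⟩ := hH1A x
    obtain ⟨u, huP, v, hvM, huv⟩ := hsurj a
    have hδu : τ u - u ∈ Aplus := sub_mem (hPstab u huP) huP
    have hδv : τ v - v ∈ Aminus := sub_mem (hMstab v hvM) hvM
    have hxB : x + (τ v - v) ∈ B := by
      refine hBmem _ ?_ (add_mem hx hδv)
      have : x + (τ v - v) = τ u - u := by
        rw [ha, huv, map_sub]; abel
      rw [this]; exact hδu
    obtain ⟨b, hbB, hb⟩ := hH1B _ hxB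
    refine ⟨b - v, sub_mem (hBM hbB) hvM, ?_⟩
    have h2 : x = (τ b - b) - (τ v - v) := by rw [← hb]; abel
    rw [h2, map_sub]; abel
end
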